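/- arXiv:2003.10871 — 2 statements merged into one kernel-verified Lean document; each statement's English description precedes it below -/
import Mathlib

section
/- Let M_α be the symmetric 2×2 matrix with entries [M_α]_{11} = 1 − 2αμ/N + α²ℓ₀²/N, [M_α]_{12} = [M_α]_{21} = ((α(ℓ+ℓ₀) + α²ℓ₀ℓ)/√N)·σ̄, [M_α]_{22} = (1 + 2αℓ + α²ℓ²)·σ̄², where 0 < μ ≤ ℓ ≤ ℓ₀, N ≥ 2, and 0 < σ̄ < 1. If 0 < α < σ̄/(3ℓ₀), then M_α is positive definite. -/
/-!
A symmetric `2 × 2` matrix with positive top-left entry and positive determinant is positive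
definite. In the variables `s = αℓ ≤ t = αℓ₀ < σ̄/3 < 1/3` the entries of `M_α` are
`a = 1 - 2αμ/N + t²/N ≥ 1 - t`, `b = (s + t + ts) σ̄/√N` and `d = (1 + s)² σ̄²`.
Since `s + t + ts ≤ 7t/3` and `N ≥ 2`, `b² ≤ (49/18) t² σ̄²`, whereas `ad ≥ (1 - t) σ̄²`,
and `1 - t - 49t²/18 > 0` for `0 ≤ t < 1/3`.
-/

noncomputable def Malpha (μ ℓ ℓ₀ σ : ℝ) (N : ℕ) (α : ℝ) : Matrix (Fin 2) (Fin 2) ℝ :=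
  !![1 - 2 * α * μ / N + α ^ 2 * ℓ₀ ^ 2 / N,
      ((α * (ℓ + ℓ₀) + α ^ 2 * ℓ₀ * ℓ) / Real.sqrt N) * σ;
     ((α * (ℓ + ℓ₀) + α ^ 2 * ℓ₀ * ℓ) / Real.sqrt N) * σ,
      (1 + 2 * α * ℓ + α ^ 2 * ℓ ^ 2) * σ ^ 2]

namespace Matrix

theorem posDef_of_fin_two {K : Type*} [Field K] [LinearOrder K] [IsStrictOrderedRing K]
    [StarRing K] [TrivialStar K] {a b d : K} (ha : 0 < a) (hdet : 0 < a * d - b * b) :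
    !![a, b; b, d].PosDef := by
  refine .of_dotProduct_mulVec_pos ?_ fun x hx => ?_
  · ext i j
    fin_cases i <;> fin_cases j <;> simp
  · have hcompleted_square : a * (star x ⬝ᵥ (!![a, b; b, d] *ᵥ x))
        = (a * x 0 + b * x 1) ^ 2 + (a * d - b * b) * x 1 ^ 2 := by
      simp [dotProduct, Fin.sum_univ_two]
      ring
    refine pos_of_mul_pos_right (hcompleted_square ▸ ?_) ha.le
    rcases eq_or_ne (x 1) 0 with h1 | h1
    · have h0 : x 0 ≠ 0 := fun h0 => hx (by ext i; fin_cases i <;> assumption)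
      simpa [h1] using sq_pos_of_ne_zero (mul_ne_zero ha.ne' h0)
    · positivity

end Matrix

namespace Malpha

theorem eq_rescaled (μ ℓ ℓ₀ σ : ℝ) (N : ℕ) (α : ℝ) :
    Malpha μ ℓ ℓ₀ σ N α =
      !![1 - 2 * (α * μ) / N + (α * ℓ₀) ^ 2 / N,
          (α * ℓ + α * ℓ₀ + α * ℓ₀ * (α * ℓ)) / √N * σ;
         (α * ℓ + α * ℓ₀ + α * ℓ₀ * (α * ℓ)) / √N * σ,
          (1 + α * ℓ) ^ 2 * σ ^ 2] := by
  unfold Malpha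
  congr 1
  ring_nf

theorem one_sub_le_corner {m t N : ℝ} (hmt : m ≤ t) (ht : 0 ≤ t) (hN : 2 ≤ N) :
    1 - t ≤ 1 - 2 * m / N + t ^ 2 / N := by
  have hN0 : 0 < N := by linarith
  have hlinear : 2 * m / N ≤ t := by
    rw [div_le_iff₀ hN0]
    nlinarith
  have hquadratic : 0 ≤ t ^ 2 / N := by positivity
  linarith

theorem cross_sq_div_le {s t N : ℝ} (hs : 0 ≤ s) (hst : s ≤ t) (ht : t ≤ 1 / 3)
    (hN : 2 ≤ N) : (s + t + t * s) ^ 2 / N ≤ 49 / 18 * t ^ 2 := by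
  have hcross : s + t + t * s ≤ 7 / 3 * t := by nlinarith
  rw [div_le_iff₀ (by linarith)]
  nlinarith [pow_le_pow_left₀ (by nlinarith) hcross 2]

theorem det_pos_of_rescaled {m s t σ N : ℝ} (hmt : m ≤ t) (hs : 0 ≤ s) (hst : s ≤ t)
    (ht : t < 1 / 3) (hN : 2 ≤ N) (hσ : σ ≠ 0) :
    0 < (1 - 2 * m / N + t ^ 2 / N) * ((1 + s) ^ 2 * σ ^ 2)
      - (s + t + t * s) / √N * σ * ((s + t + t * s) / √N * σ) := by
  set a := 1 - 2 * m / N + t ^ 2 / N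
  have hN0 : 0 < N := by linarith
  have hcorner : 1 - t ≤ a := one_sub_le_corner hmt (hs.trans hst) hN
  have hcross := cross_sq_div_le hs hst ht.le hN
  have hfactor : a * ((1 + s) ^ 2 * σ ^ 2)
      - (s + t + t * s) / √N * σ * ((s + t + t * s) / √N * σ)
      = σ ^ 2 * (a * (1 + s) ^ 2 - (s + t + t * s) ^ 2 / N) := by
    field_simp
    rw [Real.sq_sqrt hN0.le]
    ring
  rw [hfactor]
  refine mul_pos (by positivity) ?_
  have ha : a ≤ a * (1 + s) ^ 2 := le_mul_of_one_le_right (by linarith) (by nlinarith)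
  nlinarith

end Malpha

theorem Malpha_posdef (μ ℓ ℓ₀ σ : ℝ) (N : ℕ) (α : ℝ)
    (hμ : 0 < μ) (hμℓ : μ ≤ ℓ) (hℓℓ₀ : ℓ ≤ ℓ₀) (hN : 2 ≤ N)
    (hσ0 : 0 < σ) (hσ1 : σ < 1) (hα0 : 0 < α) (hα : α < σ / (3 * ℓ₀)) :
    (Malpha μ ℓ ℓ₀ σ N α).PosDef := by
  have hℓ : 0 < ℓ := hμ.trans_le hμℓ
  have hℓ₀ : 0 < ℓ₀ := hℓ.trans_le hℓℓ₀
  have ht : α * ℓ₀ < 1 / 3 := by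
    have := (lt_div_iff₀ (by positivity)).mp hα
    linarith
  have hmt : α * μ ≤ α * ℓ₀ := by gcongr; linarith
  have hst : α * ℓ ≤ α * ℓ₀ := by gcongr
  have hN' : (2 : ℝ) ≤ N := by exact_mod_cast hN
  rw [Malpha.eq_rescaled]
  refine Matrix.posDef_of_fin_two ?_
    (Malpha.det_pos_of_rescaled hmt (by positivity) hst ht hN' hσ0.ne')
  linarith [Malpha.one_sub_le_corner hmt (by positivity) hN']
end

section
/- Let σ̄ ∈ (0,1), μ, ℓ, ℓ₀ > 0 with μ ≤ ℓ ≤ ℓ₀, and N ≥ 2. There exists ᾱ > 0, independent of N, such that for every α ∈ (0, ᾱ) the matrix M_α (defined entrywise with the factors 1/N and 1/√N as in Theorem 1) satisfies λ_max(M_α) < 1; i.e., the step-size bound guaranteeing contraction does not vanish as N → ∞. -/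
open Filter Topology Matrix

theorem Matrix.posDef_fin_two_of {a b c : ℝ} (ha : 0 < a) (hdet : b ^ 2 < a * c) :
    (!![a, b; b, c] : Matrix (Fin 2) (Fin 2) ℝ).PosDef := by
  refine PosDef.of_dotProduct_mulVec_pos ?_ fun x hx => ?_
  · ext i j
    fin_cases i <;> fin_cases j <;> rfl
  have hQ : star x ⬝ᵥ (!![a, b; b, c] *ᵥ x) = a * x 0 ^ 2 + 2 * b * x 0 * x 1 + c * x 1 ^ 2 := by
    simp only [star_trivial, dotProduct, mulVec, Fin.sum_univ_two, of_apply, cons_val',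
      cons_val_zero, cons_val_one, empty_val', cons_val_fin_one]
    ring
  rw [hQ]
  rcases eq_or_ne (x 1) 0 with h1 | h1
  · have h0 : x 0 ≠ 0 := fun h0 => hx (by ext i; fin_cases i <;> assumption)
    rw [h1]
    nlinarith [sq_pos_of_ne_zero h0]
  · -- `a * Q x = (a x₀ + b x₁)² + (a c - b²) x₁²`
    nlinarith [sq_nonneg (a * x 0 + b * x 1), mul_pos (sub_pos.2 hdet) (sq_pos_of_ne_zero h1)]

theorem one_sub_Malpha_eq (μ ℓ ℓ₀ σ : ℝ) (N : ℕ) (α : ℝ) :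
    1 - Malpha μ ℓ ℓ₀ σ N α =
      !![α * (2 * μ - α * ℓ₀ ^ 2) / N, -(α * (ℓ + ℓ₀ + α * ℓ₀ * ℓ) * σ / Real.sqrt N);
         -(α * (ℓ + ℓ₀ + α * ℓ₀ * ℓ) * σ / Real.sqrt N), 1 - (1 + α * ℓ) ^ 2 * σ ^ 2] := by
  rw [Malpha, one_fin_two, of_sub_of]
  congr 1
  ext i j
  fin_cases i <;> fin_cases j <;> dsimp <;> ring

theorem one_sub_Malpha_posDef {μ ℓ ℓ₀ σ α : ℝ} {N : ℕ} (hN : 0 < N) (hα : 0 < α)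
    (hdiag : α * ℓ₀ ^ 2 < 2 * μ)
    (hdet : α * (ℓ + ℓ₀ + α * ℓ₀ * ℓ) ^ 2 * σ ^ 2 <
      (2 * μ - α * ℓ₀ ^ 2) * (1 - (1 + α * ℓ) ^ 2 * σ ^ 2)) :
    (1 - Malpha μ ℓ ℓ₀ σ N α).PosDef := by
  have hN' : (0 : ℝ) < N := Nat.cast_pos.2 hN
  rw [one_sub_Malpha_eq]
  refine posDef_fin_two_of (div_pos (mul_pos hα (sub_pos.2 hdiag)) hN') ?_
  rw [neg_sq, div_pow, Real.sq_sqrt hN'.le, div_mul_eq_mul_div]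
  refine div_lt_div_of_pos_right ?_ hN'
  nlinarith [mul_lt_mul_of_pos_left hdet hα]

theorem stepsize_bound_independent_of_N_general (μ ℓ ℓ₀ σ : ℝ)
    (hμ : 0 < μ) (hσ0 : 0 < σ) (hσ1 : σ < 1) :
    ∃ αbar : ℝ, 0 < αbar ∧ ∀ N : ℕ, 2 ≤ N → ∀ α : ℝ, 0 < α → α < αbar →
      ((1 : Matrix (Fin 2) (Fin 2) ℝ) - Malpha μ ℓ ℓ₀ σ N α).PosDef := by
  have hdiag : ∀ᶠ α in 𝓝 (0 : ℝ), α * ℓ₀ ^ 2 < 2 * μ :=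
    ContinuousAt.eventually_lt (by fun_prop) (by fun_prop) (by simpa using hμ)
  have hdet : ∀ᶠ α in 𝓝 (0 : ℝ), α * (ℓ + ℓ₀ + α * ℓ₀ * ℓ) ^ 2 * σ ^ 2 <
      (2 * μ - α * ℓ₀ ^ 2) * (1 - (1 + α * ℓ) ^ 2 * σ ^ 2) := by
    refine ContinuousAt.eventually_lt (by fun_prop) (by fun_prop) ?_
    simp only [zero_mul, sub_zero, add_zero, one_pow, one_mul]
    exact mul_pos (by linarith) (by nlinarith)
  obtain ⟨αbar, hαbar, hsub⟩ :=
    mem_nhdsGT_iff_exists_Ioo_subset.1 (nhdsWithin_le_nhds (hdiag.and hdet))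
  refine ⟨αbar, hαbar, fun N hN α hα hlt => ?_⟩
  obtain ⟨h1, h2⟩ := hsub ⟨hα, hlt⟩
  exact one_sub_Malpha_posDef (by omega) hα h1 h2

theorem stepsize_bound_independent_of_N (μ ℓ ℓ₀ σ : ℝ)
    (hμ : 0 < μ) (hℓ : 0 < ℓ) (hℓ₀ : 0 < ℓ₀)
    (hμℓ : μ ≤ ℓ) (hℓℓ₀ : ℓ ≤ ℓ₀) (hσ0 : 0 < σ) (hσ1 : σ < 1) :
    ∃ αbar : ℝ, 0 < αbar ∧ ∀ N : ℕ, 2 ≤ N → ∀ α : ℝ, 0 < α → α < αbar →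
      ((1 : Matrix (Fin 2) (Fin 2) ℝ) - Malpha μ ℓ ℓ₀ σ N α).PosDef :=
  stepsize_bound_independent_of_N_general μ ℓ ℓ₀ σ hμ hσ0 hσ1
end
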